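/- arXiv:2210.14575 — 2 statements merged into one kernel-verified Lean document; each statement's English description precedes it below -/
import Mathlib

section
/- Let ρ and σ be density operators on A_I⊗B_I, and let W_0 = ρ ⊗ 1_{A_O⊗B_O} and W_1 = σ ⊗ 1_{A_O⊗B_O} be the corresponding free process matrices. Then the optimal success probability of discrimination satisfies p_succ(W_0, W_1) = 1/2 + (1/4)·‖ρ − σ‖₁. -/
/-! For a free process `ρ ⊗ 1`, the value `tr((ρ ⊗ 1) S)` only depends on the partial trace
`tr_{A_O B_O} S`. For a strategy `(S₀, S₁)` the matrix `P := tr_{A_O B_O} S₀` is an effect,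
`0 ≤ P ≤ 1`, because `tr_{A_O B_O} (S₀ + S₁) = 1`, and the success value is
`1 + tr((ρ - σ) P)`. Conversely every effect `P` arises, from `S₀ = c P ⊗ 1` and
`S₁ = c (1 - P) ⊗ 1` with `c = 1 / (dim A_O · dim B_O)`: their sum is the maximally mixed
channel, which is non-signaling. What remains is Helstrom's problem: in an eigenbasis of
`D = ρ - σ` the maximum of `tr(D P)` over effects is the sum of the positive eigenvalues of `D`,
attained by the projection onto the nonnegative eigenspace, and since `tr D = 0` this sum is
`‖D‖₁ / 2`. -/

open scoped ComplexOrder Matrix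

namespace ProcessMatrices

/-- The trace norm (sum of singular values) of a complex square matrix. -/
noncomputable def traceNorm {n : Type} [Fintype n] [DecidableEq n] (X : Matrix n n ℂ) : ℝ :=
  ∑ i, Real.sqrt ((Matrix.posSemidef_conjTranspose_mul_self X).isHermitian.eigenvalues i)

variable {aI aO bI bO : Type} [Fintype aI] [Fintype aO] [Fintype bI] [Fintype bO]
  [DecidableEq aI] [DecidableEq aO] [DecidableEq bI] [DecidableEq bO]
  [Nonempty aI] [Nonempty aO] [Nonempty bI] [Nonempty bO]

/-- `_{A_O} W = (1_{A_O}/dim A_O) ⊗ tr_{A_O} W`, as an operator on the full space. -/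
noncomputable def rAO (W : Matrix (aI × aO × bI × bO) (aI × aO × bI × bO) ℂ) :
    Matrix (aI × aO × bI × bO) (aI × aO × bI × bO) ℂ := fun i j =>
  (if i.2.1 = j.2.1 then ((Fintype.card aO : ℂ))⁻¹ else 0) *
    ∑ k : aO, W (i.1, k, i.2.2.1, i.2.2.2) (j.1, k, j.2.2.1, j.2.2.2)

/-- `_{B_O} W`. -/
noncomputable def rBO (W : Matrix (aI × aO × bI × bO) (aI × aO × bI × bO) ℂ) :
    Matrix (aI × aO × bI × bO) (aI × aO × bI × bO) ℂ := fun i j =>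
  (if i.2.2.2 = j.2.2.2 then ((Fintype.card bO : ℂ))⁻¹ else 0) *
    ∑ k : bO, W (i.1, i.2.1, i.2.2.1, k) (j.1, j.2.1, j.2.2.1, k)

/-- `_{A_O B_O} W`. -/
noncomputable def rAOBO (W : Matrix (aI × aO × bI × bO) (aI × aO × bI × bO) ℂ) :
    Matrix (aI × aO × bI × bO) (aI × aO × bI × bO) ℂ := fun i j =>
  (if i.2.1 = j.2.1 ∧ i.2.2.2 = j.2.2.2 then
      ((Fintype.card aO : ℂ) * (Fintype.card bO : ℂ))⁻¹ else 0) *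
    ∑ k : aO, ∑ l : bO, W (i.1, k, i.2.2.1, l) (j.1, k, j.2.2.1, l)

/-- `_{A_I A_O} W`. -/
noncomputable def rAIAO (W : Matrix (aI × aO × bI × bO) (aI × aO × bI × bO) ℂ) :
    Matrix (aI × aO × bI × bO) (aI × aO × bI × bO) ℂ := fun i j =>
  (if i.1 = j.1 ∧ i.2.1 = j.2.1 then
      ((Fintype.card aI : ℂ) * (Fintype.card aO : ℂ))⁻¹ else 0) *
    ∑ k : aI, ∑ l : aO, W (k, l, i.2.2.1, i.2.2.2) (k, l, j.2.2.1, j.2.2.2)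

/-- `_{B_I B_O} W`. -/
noncomputable def rBIBO (W : Matrix (aI × aO × bI × bO) (aI × aO × bI × bO) ℂ) :
    Matrix (aI × aO × bI × bO) (aI × aO × bI × bO) ℂ := fun i j =>
  (if i.2.2.1 = j.2.2.1 ∧ i.2.2.2 = j.2.2.2 then
      ((Fintype.card bI : ℂ) * (Fintype.card bO : ℂ))⁻¹ else 0) *
    ∑ k : bI, ∑ l : bO, W (i.1, i.2.1, k, l) (j.1, j.2.1, k, l)

/-- `_{A_I A_O B_O} W`. -/
noncomputable def rAIAOBO (W : Matrix (aI × aO × bI × bO) (aI × aO × bI × bO) ℂ) :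
    Matrix (aI × aO × bI × bO) (aI × aO × bI × bO) ℂ := fun i j =>
  (if i.1 = j.1 ∧ i.2.1 = j.2.1 ∧ i.2.2.2 = j.2.2.2 then
      ((Fintype.card aI : ℂ) * (Fintype.card aO : ℂ) * (Fintype.card bO : ℂ))⁻¹ else 0) *
    ∑ k : aI, ∑ l : aO, ∑ m : bO, W (k, l, i.2.2.1, m) (k, l, j.2.2.1, m)

/-- `_{A_O B_I B_O} W`. -/
noncomputable def rAOBIBO (W : Matrix (aI × aO × bI × bO) (aI × aO × bI × bO) ℂ) :
    Matrix (aI × aO × bI × bO) (aI × aO × bI × bO) ℂ := fun i j =>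
  (if i.2.1 = j.2.1 ∧ i.2.2.1 = j.2.2.1 ∧ i.2.2.2 = j.2.2.2 then
      ((Fintype.card aO : ℂ) * (Fintype.card bI : ℂ) * (Fintype.card bO : ℂ))⁻¹ else 0) *
    ∑ k : aO, ∑ l : bI, ∑ m : bO, W (i.1, k, l, m) (j.1, k, l, m)

/-- `W` is a process matrix. -/
structure IsProcessMatrix (W : Matrix (aI × aO × bI × bO) (aI × aO × bI × bO) ℂ) : Prop where
  posSemidef : W.PosSemidef
  condA : rAIAO W = rAIAOBO W
  condB : rBIBO W = rAOBIBO W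
  condAB : W = rBO W + rAO W - rAOBO W
  traceEq : W.trace = (Fintype.card aO : ℂ) * (Fintype.card bO : ℂ)

/-- Partial trace over `A_O`. -/
noncomputable def ptrAO (N : Matrix (aI × aO × bI × bO) (aI × aO × bI × bO) ℂ) :
    Matrix (aI × bI × bO) (aI × bI × bO) ℂ := fun i j =>
  ∑ k : aO, N (i.1, k, i.2.1, i.2.2) (j.1, k, j.2.1, j.2.2)

/-- Partial trace over `B_O`. -/
noncomputable def ptrBO (N : Matrix (aI × aO × bI × bO) (aI × aO × bI × bO) ℂ) :
    Matrix (aI × aO × bI) (aI × aO × bI) ℂ := fun i j =>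
  ∑ k : bO, N (i.1, i.2.1, i.2.2, k) (j.1, j.2.1, j.2.2, k)

/-- Partial trace over `A_O ⊗ B_O`. -/
noncomputable def ptrAOBO (N : Matrix (aI × aO × bI × bO) (aI × aO × bI × bO) ℂ) :
    Matrix (aI × bI) (aI × bI) ℂ := fun i j =>
  ∑ k : aO, ∑ l : bO, N (i.1, k, i.2, l) (j.1, k, j.2, l)

/-- `N` is the Choi matrix of a non-signaling channel. -/
structure MemNS (N : Matrix (aI × aO × bI × bO) (aI × aO × bI × bO) ℂ) : Prop where
  posSemidef : N.PosSemidef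
  trChannel : ptrAOBO N = 1
  nsA : ∀ i j : aI × bI × bO, ptrAO N i j =
    (if i.1 = j.1 then ((Fintype.card aI : ℂ))⁻¹ else 0) *
      ∑ m : aI, ptrAO N (m, i.2.1, i.2.2) (m, j.2.1, j.2.2)
  nsB : ∀ i j : aI × aO × bI, ptrBO N i j =
    (if i.2.2 = j.2.2 then ((Fintype.card bI : ℂ))⁻¹ else 0) *
      ∑ m : bI, ptrBO N (i.1, i.2.1, m) (j.1, j.2.1, m)

/-- `sup { ‖√N (W₀ - W₁) √N‖₁ : N ∈ NS }`. -/
noncomputable def discrBound (W0 W1 : Matrix (aI × aO × bI × bO) (aI × aO × bI × bO) ℂ) : ℝ :=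
  sSup { x : ℝ | ∃ N : Matrix (aI × aO × bI × bO) (aI × aO × bI × bO) ℂ, ∃ hN : MemNS N,
    x = traceNorm ((hN.posSemidef.1.eigenvectorUnitary.1 * Matrix.diagonal ((↑) ∘ Real.sqrt ∘ hN.posSemidef.1.eigenvalues) * (star hN.posSemidef.1.eigenvectorUnitary : Matrix (aI × aO × bI × bO) (aI × aO × bI × bO) ℂ)) * (W0 - W1) * (hN.posSemidef.1.eigenvectorUnitary.1 * Matrix.diagonal ((↑) ∘ Real.sqrt ∘ hN.posSemidef.1.eigenvalues) * (star hN.posSemidef.1.eigenvectorUnitary : Matrix (aI × aO × bI × bO) (aI × aO × bI × bO) ℂ))) }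

/-- The optimal probability of discriminating the process matrices `W0` and `W1`
over non-signaling strategies. -/
noncomputable def pSucc (W0 W1 : Matrix (aI × aO × bI × bO) (aI × aO × bI × bO) ℂ) : ℝ :=
  (1/2) * sSup { x : ℝ | ∃ S0 S1 : Matrix (aI × aO × bI × bO) (aI × aO × bI × bO) ℂ,
    S0.PosSemidef ∧ S1.PosSemidef ∧ MemNS (S0 + S1) ∧
    x = ((W0 * S0).trace + (W1 * S1).trace).re }

/-- `W` is a process matrix representing a quantum comb with causal order `A ≺ B`:
`W = W' ⊗ 1_{B_O}` with `tr_{B_I} W' = W'' ⊗ 1_{A_O}`. -/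
def MemCombAB (W : Matrix (aI × aO × bI × bO) (aI × aO × bI × bO) ℂ) : Prop :=
  IsProcessMatrix W ∧
  ∃ W' : Matrix (aI × aO × bI) (aI × aO × bI) ℂ,
    (∀ i j, W i j = (if i.2.2.2 = j.2.2.2 then 1 else 0) *
        W' (i.1, i.2.1, i.2.2.1) (j.1, j.2.1, j.2.2.1)) ∧
    ∃ W'' : Matrix aI aI ℂ, ∀ p q : aI × aO,
      (∑ k : bI, W' (p.1, p.2, k) (q.1, q.2, k)) = (if p.2 = q.2 then 1 else 0) * W'' p.1 q.1

/-- `W` is a process matrix representing a quantum comb with causal order `B ≺ A`: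
`W = W' ⊗ 1_{A_O}` (in the `A_O` slot) with `tr_{A_I} W' = W'' ⊗ 1_{B_O}`. -/
def MemCombBA (W : Matrix (aI × aO × bI × bO) (aI × aO × bI × bO) ℂ) : Prop :=
  IsProcessMatrix W ∧
  ∃ W' : Matrix (aI × bI × bO) (aI × bI × bO) ℂ,
    (∀ i j, W i j = (if i.2.1 = j.2.1 then 1 else 0) *
        W' (i.1, i.2.2.1, i.2.2.2) (j.1, j.2.2.1, j.2.2.2)) ∧
    ∃ W'' : Matrix bI bI ℂ, ∀ p q : bI × bO,
      (∑ k : aI, W' (k, p.1, p.2) (k, q.1, q.2)) = (if p.2 = q.2 then 1 else 0) * W'' p.1 q.1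

/-- `W` is a free process matrix: `W = ρ ⊗ 1_{A_O ⊗ B_O}` for a density operator `ρ`. -/
def MemFree (W : Matrix (aI × aO × bI × bO) (aI × aO × bI × bO) ℂ) : Prop :=
  ∃ ρ : Matrix (aI × bI) (aI × bI) ℂ, ρ.PosSemidef ∧ ρ.trace = 1 ∧
    ∀ i j, W i j = (if i.2.1 = j.2.1 ∧ i.2.2.2 = j.2.2.2 then 1 else 0) *
      ρ (i.1, i.2.2.1) (j.1, j.2.2.1)

/-- `W` is a causally separable process matrix. -/
def MemSep (W : Matrix (aI × aO × bI × bO) (aI × aO × bI × bO) ℂ) : Prop :=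
  ∃ p : ℝ, 0 ≤ p ∧ p ≤ 1 ∧ ∃ W1 W2 : Matrix (aI × aO × bI × bO) (aI × aO × bI × bO) ℂ,
    MemCombAB W1 ∧ MemCombBA W2 ∧ W = (p : ℂ) • W1 + ((1 - p : ℝ) : ℂ) • W2

/-- `(L0, L1)` is an adaptive tester for the causal order `A ≺ B`. -/
structure IsAdaptiveTester (L0 L1 : Matrix (aI × aO × bI × bO) (aI × aO × bI × bO) ℂ) :
    Prop where
  posSemidef0 : L0.PosSemidef
  posSemidef1 : L1.PosSemidef
  comb : ∃ J : Matrix (aI × aO) (aI × aO) ℂ, J.PosSemidef ∧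
    (∀ p q : aI, (∑ k : aO, J (p, k) (q, k)) = if p = q then 1 else 0) ∧
    ∀ i j : aI × aO × bI, ptrBO (L0 + L1) i j =
      (if i.2.2 = j.2.2 then 1 else 0) * J (i.1, i.2.1) (j.1, j.2.1)

/-- The optimal probability of discriminating `W0` and `W1` over adaptive testers. -/
noncomputable def pAdapt (W0 W1 : Matrix (aI × aO × bI × bO) (aI × aO × bI × bO) ℂ) : ℝ :=
  (1/2) * sSup { x : ℝ | ∃ L0 L1 : Matrix (aI × aO × bI × bO) (aI × aO × bI × bO) ℂ,
    IsAdaptiveTester L0 L1 ∧ x = ((W0 * L0).trace + (W1 * L1).trace).re }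

end ProcessMatrices

open scoped MatrixOrder Kronecker

namespace Matrix

variable {n : Type*} [Fintype n] [DecidableEq n]

lemma IsHermitian.trace_cfc {A : Matrix n n ℂ} (hA : A.IsHermitian) (f : ℝ → ℝ) :
    (cfc f A).trace = ∑ i, (f (hA.eigenvalues i) : ℂ) := by
  rw [hA.cfc_eq, IsHermitian.cfc, Unitary.conjStarAlgAut_apply, trace_mul_cycle,
    Unitary.coe_star_mul_self, Matrix.one_mul, trace_diagonal]
  rfl

lemma IsHermitian.trace_mul_eq_sum_eigenvalues_mul {D : Matrix n n ℂ} (hD : D.IsHermitian)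
    (P : Matrix n n ℂ) :
    (D * P).trace = ∑ i, (hD.eigenvalues i : ℂ) *
      ((hD.eigenvectorUnitary : Matrix n n ℂ)ᴴ * P * hD.eigenvectorUnitary) i i := by
  set U : Matrix n n ℂ := (hD.eigenvectorUnitary : Matrix n n ℂ)
  calc (D * P).trace
      = (U * (diagonal (RCLike.ofReal ∘ hD.eigenvalues) * (Uᴴ * P))).trace := by
        conv_lhs => rw [hD.spectral_theorem, Unitary.conjStarAlgAut_apply]
        simp only [Matrix.mul_assoc, U, star_eq_conjTranspose]
    _ = (diagonal (RCLike.ofReal ∘ hD.eigenvalues) * (Uᴴ * P * U)).trace := by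
        rw [trace_mul_comm, Matrix.mul_assoc]
    _ = _ := by simp [trace, diagonal_mul]

theorem IsHermitian.isGreatest_re_trace_mul {D : Matrix n n ℂ} (hD : D.IsHermitian) :
    IsGreatest {x : ℝ | ∃ P : Matrix n n ℂ, 0 ≤ P ∧ P ≤ 1 ∧ x = (D * P).trace.re}
      (∑ i, (hD.eigenvalues i)⁺) := by
  set U : Matrix n n ℂ := (hD.eigenvectorUnitary : Matrix n n ℂ)
  have hUU : Uᴴ * U = 1 := Unitary.coe_star_mul_self hD.eigenvectorUnitary
  have hUU' : U * Uᴴ = 1 := Unitary.coe_mul_star_self hD.eigenvectorUnitary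
  constructor
  · have hconj (f : n → ℝ) (hf : ∀ i, 0 ≤ f i) : 0 ≤ U * diagonal (fun i => (f i : ℂ)) * Uᴴ :=
      ((PosSemidef.diagonal fun i => Complex.zero_le_real.2 (hf i)).mul_mul_conjTranspose_same
        U).nonneg
    set p : n → ℝ := fun i => if 0 ≤ hD.eigenvalues i then 1 else 0
    have hp (i : n) : 0 ≤ p i ∧ 0 ≤ 1 - p i := by
      simp only [p]; split_ifs <;> norm_num
    refine ⟨U * diagonal (fun i => (p i : ℂ)) * Uᴴ, hconj p fun i => (hp i).1, ?_, ?_⟩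
    · have h : 1 - U * diagonal (fun i => (p i : ℂ)) * Uᴴ =
          U * diagonal (fun i => ((1 - p i : ℝ) : ℂ)) * Uᴴ := by
        simp [Matrix.mul_sub, Matrix.sub_mul, hUU', ← diagonal_sub]
      rw [← sub_nonneg, h]
      exact hconj _ fun i => (hp i).2
    · have hUpU : Uᴴ * (U * diagonal (fun i => (p i : ℂ)) * Uᴴ) * U =
          diagonal (fun i => (p i : ℂ)) := by
        simp only [Matrix.mul_assoc, hUU, Matrix.mul_one, ← Matrix.mul_assoc Uᴴ U,
          Matrix.one_mul]
      rw [hD.trace_mul_eq_sum_eigenvalues_mul, hUpU, Complex.re_sum]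
      refine Finset.sum_congr rfl fun i _ => ?_
      simp only [diagonal_apply_eq, p]
      split_ifs with h
      · simp [posPart_eq_self.2 h]
      · simp [posPart_eq_zero.2 (le_of_not_ge h)]
  · rintro x ⟨P, hP0, hP1, rfl⟩
    rw [hD.trace_mul_eq_sum_eigenvalues_mul, Complex.re_sum]
    refine Finset.sum_le_sum fun i _ => ?_
    have hQ0 : 0 ≤ (Uᴴ * P * U) i i :=
      ((nonneg_iff_posSemidef.1 hP0).conjTranspose_mul_mul_same U).diag_nonneg
    have hQ1 : 0 ≤ (1 - Uᴴ * P * U) i i := by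
      simpa [Matrix.mul_sub, Matrix.sub_mul, hUU] using
        ((le_iff.1 hP1).conjTranspose_mul_mul_same U).diag_nonneg (i := i)
    rw [Complex.nonneg_iff] at hQ0 hQ1
    simp only [sub_apply, one_apply_eq, Complex.sub_re, Complex.one_re] at hQ1
    simp only [Complex.mul_re, Complex.ofReal_re, Complex.ofReal_im, zero_mul, sub_zero]
    rcases le_total 0 (hD.eigenvalues i) with h | h
    · rw [posPart_eq_self.2 h]; nlinarith [hQ1.1]
    · rw [posPart_eq_zero.2 h]; nlinarith [hQ0.1]

end Matrix

namespace ProcessMatrices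

open Matrix

lemma ofReal_traceNorm {n : Type} [Fintype n] [DecidableEq n] (X : Matrix n n ℂ) :
    (traceNorm X : ℂ) = (CFC.abs X).trace := by
  have hX := posSemidef_conjTranspose_mul_self X
  rw [CFC.abs, star_eq_conjTranspose, CFC.sqrt_eq_cfc, cfc_nnreal_eq_real _ _ hX.nonneg,
    hX.isHermitian.trace_cfc, traceNorm]
  push_cast
  refine Finset.sum_congr rfl fun i _ => ?_
  rw [Real.coe_toNNReal _ (hX.eigenvalues_nonneg i)]

lemma traceNorm_eq_sum_abs_eigenvalues {n : Type} [Fintype n] [DecidableEq n]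
    {D : Matrix n n ℂ} (hD : D.IsHermitian) : traceNorm D = ∑ i, |hD.eigenvalues i| := by
  have h := ofReal_traceNorm D
  rw [CFC.abs_eq_cfc_norm D hD.isSelfAdjoint, hD.trace_cfc] at h
  exact_mod_cast h

lemma traceNorm_eq_two_mul_sum_posPart {n : Type} [Fintype n] [DecidableEq n]
    {D : Matrix n n ℂ} (hD : D.IsHermitian) (htr : D.trace = 0) :
    traceNorm D = 2 * ∑ i, (hD.eigenvalues i)⁺ := by
  have hsum : ∑ i, hD.eigenvalues i = 0 := by
    simpa [hD.trace_eq_sum_eigenvalues] using congrArg Complex.re htr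
  rw [traceNorm_eq_sum_abs_eigenvalues hD, Finset.mul_sum, ← add_zero (∑ i, |_|), ← hsum,
    ← Finset.sum_add_distrib]
  refine Finset.sum_congr rfl fun i _ => ?_
  rw [abs_add_eq_two_nsmul_posPart, nsmul_eq_mul, Nat.cast_ofNat]

/-- `ρ ⊗ 1_{A_O ⊗ B_O}`. -/
def tensorOneOut {aI aO bI bO : Type} [DecidableEq aO] [DecidableEq bO]
    (ρ : Matrix (aI × bI) (aI × bI) ℂ) : Matrix (aI × aO × bI × bO) (aI × aO × bI × bO) ℂ :=
  Matrix.of fun i j => (if i.2.1 = j.2.1 ∧ i.2.2.2 = j.2.2.2 then 1 else 0) *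
    ρ (i.1, i.2.2.1) (j.1, j.2.2.1)

section tensorOneOut

variable {aI aO bI bO : Type} [DecidableEq aO] [DecidableEq bO]

lemma tensorOneOut_add (ρ σ : Matrix (aI × bI) (aI × bI) ℂ) :
    (tensorOneOut (ρ + σ) : Matrix (aI × aO × bI × bO) _ ℂ) =
      tensorOneOut ρ + tensorOneOut σ := by
  ext i j
  simp [tensorOneOut, mul_add]

lemma tensorOneOut_smul_one [DecidableEq aI] [DecidableEq bI] (c : ℂ) :
    (tensorOneOut (c • 1 : Matrix (aI × bI) (aI × bI) ℂ) : Matrix (aI × aO × bI × bO) _ ℂ) =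
      c • 1 := by
  ext i j
  obtain ⟨a, k, b, l⟩ := i
  obtain ⟨a', k', b', l'⟩ := j
  by_cases hk : k = k' <;> by_cases hl : l = l' <;> simp [tensorOneOut, one_apply, hk, hl]

lemma posSemidef_tensorOneOut [Fintype aI] [Fintype aO] [Fintype bI] [Fintype bO]
    {ρ : Matrix (aI × bI) (aI × bI) ℂ} (hρ : ρ.PosSemidef) :
    (tensorOneOut ρ : Matrix (aI × aO × bI × bO) _ ℂ).PosSemidef := by
  have h : (tensorOneOut ρ : Matrix (aI × aO × bI × bO) _ ℂ) =
      (ρ ⊗ₖ (1 : Matrix (aO × bO) (aO × bO) ℂ)).submatrix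
        (fun i => ((i.1, i.2.2.1), (i.2.1, i.2.2.2)))
        (fun i => ((i.1, i.2.2.1), (i.2.1, i.2.2.2))) := by
    ext i j
    simp [tensorOneOut, one_apply, mul_comm]
  rw [h]
  exact (hρ.kronecker PosSemidef.one).submatrix _

variable [Fintype aO] [Fintype bO]

lemma ptrAOBO_tensorOneOut (ρ : Matrix (aI × bI) (aI × bI) ℂ) :
    ptrAOBO (tensorOneOut ρ : Matrix (aI × aO × bI × bO) _ ℂ) =
      (Fintype.card aO * Fintype.card bO : ℂ) • ρ := by
  ext i j
  simp [ptrAOBO, tensorOneOut, mul_assoc]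

lemma trace_tensorOneOut_mul [Fintype aI] [Fintype bI] (ρ : Matrix (aI × bI) (aI × bI) ℂ)
    (S : Matrix (aI × aO × bI × bO) (aI × aO × bI × bO) ℂ) :
    (tensorOneOut ρ * S).trace = (ρ * ptrAOBO S).trace := by
  simp only [trace, diag, mul_apply, tensorOneOut, of_apply, ptrAOBO, Fintype.sum_prod_type,
    ite_and, ite_mul, one_mul, zero_mul, Finset.mul_sum, Finset.sum_ite_irrel,
    Finset.sum_const_zero, Finset.sum_ite_eq, Finset.mem_univ, if_true]
  simp only [Finset.sum_comm (γ := aO) (α := aI), Finset.sum_comm (γ := aO) (α := bI),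
    Finset.sum_comm (γ := bO) (α := aI), Finset.sum_comm (γ := bO) (α := bI)]

end tensorOneOut

section partialTrace

variable {aI aO bI bO : Type}

lemma ptrAOBO_add [Fintype aO] [Fintype bO]
    (S T : Matrix (aI × aO × bI × bO) (aI × aO × bI × bO) ℂ) :
    ptrAOBO (S + T) = ptrAOBO S + ptrAOBO T := by
  ext i j
  simp [ptrAOBO, Finset.sum_add_distrib]

lemma posSemidef_ptrAOBO [Fintype aI] [Fintype aO] [Fintype bI] [Fintype bO]
    {S : Matrix (aI × aO × bI × bO) (aI × aO × bI × bO) ℂ} (hS : S.PosSemidef) :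
    (ptrAOBO S).PosSemidef := by
  have h : ptrAOBO S = ∑ k : aO, ∑ l : bO,
      S.submatrix (fun u : aI × bI => (u.1, k, u.2, l)) (fun u => (u.1, k, u.2, l)) := by
    ext i j
    simp [ptrAOBO, Matrix.sum_apply]
  rw [h]
  exact posSemidef_sum _ fun k _ => posSemidef_sum _ fun l _ => hS.submatrix _

variable [DecidableEq aI] [DecidableEq aO] [DecidableEq bI] [DecidableEq bO]

lemma ptrAO_smul_one [Fintype aO] (c : ℂ) :
    ptrAO (c • 1 : Matrix (aI × aO × bI × bO) _ ℂ) = (Fintype.card aO * c) • 1 := by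
  ext i j
  simp [ptrAO, one_apply, Prod.ext_iff]

lemma ptrBO_smul_one [Fintype bO] (c : ℂ) :
    ptrBO (c • 1 : Matrix (aI × aO × bI × bO) _ ℂ) = (Fintype.card bO * c) • 1 := by
  ext i j
  simp [ptrBO, one_apply, Prod.ext_iff]

lemma ptrAOBO_smul_one [Fintype aO] [Fintype bO] (c : ℂ) :
    ptrAOBO (c • 1 : Matrix (aI × aO × bI × bO) _ ℂ) =
      (Fintype.card aO * Fintype.card bO * c) • 1 := by
  ext i j
  simp [ptrAOBO, one_apply, Prod.ext_iff, mul_assoc]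

lemma memNS_smul_one [Fintype aI] [Fintype aO] [Fintype bI] [Fintype bO]
    [Nonempty aO] [Nonempty bO] :
    MemNS ((Fintype.card aO * Fintype.card bO : ℂ)⁻¹ • 1 : Matrix (aI × aO × bI × bO) _ ℂ) := by
  have hO : (Fintype.card aO * Fintype.card bO : ℂ) ≠ 0 := by simp
  refine ⟨PosSemidef.one.smul (by positivity), ?_, fun i j => ?_, fun i j => ?_⟩
  · rw [ptrAOBO_smul_one, mul_inv_cancel₀ hO, one_smul]
  · obtain ⟨a, x⟩ := i
    obtain ⟨a', y⟩ := j
    have : Nonempty aI := ⟨a⟩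
    by_cases h : a = a' <;> simp [ptrAO_smul_one, one_apply, h]
  · obtain ⟨a, k, b⟩ := i
    obtain ⟨a', k', b'⟩ := j
    have : Nonempty bI := ⟨b⟩
    by_cases h : b = b' <;> simp [ptrBO_smul_one, one_apply, h]

end partialTrace

section strategies

variable {aI aO bI bO : Type} [Fintype aI] [Fintype aO] [Fintype bI] [Fintype bO]
  [DecidableEq aI] [DecidableEq aO] [DecidableEq bI] [DecidableEq bO]

lemma trace_tensorOneOut_mul_add_trace_tensorOneOut_mul
    {ρ σ : Matrix (aI × bI) (aI × bI) ℂ} (hσ1 : σ.trace = 1)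
    {S0 S1 : Matrix (aI × aO × bI × bO) (aI × aO × bI × bO) ℂ}
    (hS : ptrAOBO (S0 + S1) = 1) :
    (tensorOneOut ρ * S0).trace + (tensorOneOut σ * S1).trace =
      1 + ((ρ - σ) * ptrAOBO S0).trace := by
  have hS1 : ptrAOBO S1 = 1 - ptrAOBO S0 := by
    rw [← hS, ptrAOBO_add, add_sub_cancel_left]
  rw [trace_tensorOneOut_mul, trace_tensorOneOut_mul, hS1, Matrix.mul_sub, Matrix.mul_one,
    Matrix.sub_mul, trace_sub, trace_sub, hσ1]
  ring

lemma strategyValues_tensorOneOut_eq [Nonempty aO] [Nonempty bO]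
    {ρ σ : Matrix (aI × bI) (aI × bI) ℂ} (hσ1 : σ.trace = 1) :
    {x : ℝ | ∃ S0 S1 : Matrix (aI × aO × bI × bO) (aI × aO × bI × bO) ℂ,
      S0.PosSemidef ∧ S1.PosSemidef ∧ MemNS (S0 + S1) ∧
      x = ((tensorOneOut ρ * S0).trace + (tensorOneOut σ * S1).trace).re} =
    (1 + ·) '' {x : ℝ | ∃ P : Matrix (aI × bI) (aI × bI) ℂ, 0 ≤ P ∧ P ≤ 1 ∧
      x = ((ρ - σ) * P).trace.re} := by
  ext x
  constructor
  · rintro ⟨S0, S1, hS0, hS1, hNS, rfl⟩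
    have hP1 : 1 - ptrAOBO S0 = ptrAOBO S1 := by
      rw [← hNS.trChannel, ptrAOBO_add, add_sub_cancel_left]
    refine ⟨_, ⟨ptrAOBO S0, (posSemidef_ptrAOBO hS0).nonneg, ?_, rfl⟩, ?_⟩
    · rw [← sub_nonneg, hP1]
      exact (posSemidef_ptrAOBO hS1).nonneg
    · rw [trace_tensorOneOut_mul_add_trace_tensorOneOut_mul hσ1 hNS.trChannel]
      simp
  · rintro ⟨_, ⟨P, hP0, hP1, rfl⟩, rfl⟩
    set c : ℂ := (Fintype.card aO * Fintype.card bO : ℂ)⁻¹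
    have hc : 0 ≤ c := by positivity
    have hsum : (tensorOneOut (c • P) + tensorOneOut (c • (1 - P)) :
        Matrix (aI × aO × bI × bO) _ ℂ) = c • 1 := by
      rw [← tensorOneOut_add, ← smul_add, add_sub_cancel, tensorOneOut_smul_one]
    have hNS : MemNS (tensorOneOut (c • P) + tensorOneOut (c • (1 - P)) :
        Matrix (aI × aO × bI × bO) _ ℂ) := hsum ▸ memNS_smul_one
    refine ⟨_, _, posSemidef_tensorOneOut ((nonneg_iff_posSemidef.1 hP0).smul hc),
      posSemidef_tensorOneOut ((le_iff.1 hP1).smul hc), hNS, ?_⟩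
    have hO : (Fintype.card aO * Fintype.card bO : ℂ) ≠ 0 := by simp
    rw [trace_tensorOneOut_mul_add_trace_tensorOneOut_mul hσ1 hNS.trChannel,
      ptrAOBO_tensorOneOut, smul_smul, mul_inv_cancel₀ hO, one_smul]
    simp

end strategies

theorem statement3_general {aI aO bI bO : Type}
    [Fintype aI] [Fintype aO] [Fintype bI] [Fintype bO]
    [DecidableEq aI] [DecidableEq aO] [DecidableEq bI] [DecidableEq bO]
    [Nonempty aO] [Nonempty bO]
    (ρ σ : Matrix (aI × bI) (aI × bI) ℂ)
    (hρ : ρ.PosSemidef) (hρ1 : ρ.trace = 1) (hσ : σ.PosSemidef) (hσ1 : σ.trace = 1)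
    (W0 W1 : Matrix (aI × aO × bI × bO) (aI × aO × bI × bO) ℂ)
    (hW0 : ∀ i j, W0 i j = (if i.2.1 = j.2.1 ∧ i.2.2.2 = j.2.2.2 then 1 else 0) *
        ρ (i.1, i.2.2.1) (j.1, j.2.2.1))
    (hW1 : ∀ i j, W1 i j = (if i.2.1 = j.2.1 ∧ i.2.2.2 = j.2.2.2 then 1 else 0) *
        σ (i.1, i.2.2.1) (j.1, j.2.2.1)) :
    pSucc W0 W1 = 1/2 + (1/4) * traceNorm (ρ - σ) := by
  obtain rfl : W0 = tensorOneOut ρ := Matrix.ext hW0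
  obtain rfl : W1 = tensorOneOut σ := Matrix.ext hW1
  have hD : (ρ - σ).IsHermitian := hρ.isHermitian.sub hσ.isHermitian
  have htr : (ρ - σ).trace = 0 := by rw [trace_sub, hρ1, hσ1, sub_self]
  have hmax := (add_right_mono (a := (1 : ℝ))).map_isGreatest hD.isGreatest_re_trace_mul
  rw [pSucc, strategyValues_tensorOneOut_eq hσ1, hmax.csSup_eq,
    traceNorm_eq_two_mul_sum_posPart hD htr]
  ring

/-- For free process matrices `W0 = ρ ⊗ 1` and `W1 = σ ⊗ 1`,
the optimal success probability is `1/2 + (1/4)·‖ρ - σ‖₁`. -/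
theorem statement3 {aI aO bI bO : Type}
    [Fintype aI] [Fintype aO] [Fintype bI] [Fintype bO]
    [DecidableEq aI] [DecidableEq aO] [DecidableEq bI] [DecidableEq bO]
    [Nonempty aI] [Nonempty aO] [Nonempty bI] [Nonempty bO]
    (ρ σ : Matrix (aI × bI) (aI × bI) ℂ)
    (hρ : ρ.PosSemidef) (hρ1 : ρ.trace = 1) (hσ : σ.PosSemidef) (hσ1 : σ.trace = 1)
    (W0 W1 : Matrix (aI × aO × bI × bO) (aI × aO × bI × bO) ℂ)
    (hW0 : ∀ i j, W0 i j = (if i.2.1 = j.2.1 ∧ i.2.2.2 = j.2.2.2 then 1 else 0) *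
        ρ (i.1, i.2.2.1) (j.1, j.2.2.1))
    (hW1 : ∀ i j, W1 i j = (if i.2.1 = j.2.1 ∧ i.2.2.2 = j.2.2.2 then 1 else 0) *
        σ (i.1, i.2.2.1) (j.1, j.2.2.1)) :
    pSucc W0 W1 = 1/2 + (1/4) * traceNorm (ρ - σ) :=
  statement3_general ρ σ hρ hρ1 hσ hσ1 W0 W1 hW0 hW1

end ProcessMatrices
end

section
/- A process matrix W on A_I⊗A_O⊗B_I⊗B_O belongs to both W^{A≺B} and W^{B≺A} if and only if W is free, i.e. W = ρ ⊗ 1_{A_O⊗B_O} for some density operator ρ on A_I⊗B_I. In other words, W^{A||B} = W^{A≺B} ∩ W^{B≺A}. -/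
open scoped ComplexOrder Matrix

/-!
Both causal-order conditions say that `W` acts as the identity on one output system: `W^{A≺B}`
on `B_O` and `W^{B≺A}` on `A_O`. A matrix that is the identity on both outputs is `ρ ⊗ 1_{A_O B_O}`,
with `ρ` the block of `W` at any fixed pair of output indices; positivity of `ρ` is inherited from
`W`, and `tr W = dim A_O · dim B_O · tr ρ` forces `tr ρ = 1`. Conversely `ρ ⊗ 1_{A_O B_O}`
visibly has both comb forms, with `tr_{B_I} ρ` and `tr_{A_I} ρ` as the reduced witnesses.
-/

namespace ProcessMatrices

section

variable {aI aO bI bO : Type}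

/-- `ρ ⊗ 1_{A_O ⊗ B_O}`, with the factors in the order `A_I, A_O, B_I, B_O`. -/
def tensorIdOutputs [DecidableEq aO] [DecidableEq bO] (ρ : Matrix (aI × bI) (aI × bI) ℂ) :
    Matrix (aI × aO × bI × bO) (aI × aO × bI × bO) ℂ := fun i j =>
  (if i.2.1 = j.2.1 ∧ i.2.2.2 = j.2.2.2 then 1 else 0) * ρ (i.1, i.2.2.1) (j.1, j.2.2.1)

def outputSlice (W : Matrix (aI × aO × bI × bO) (aI × aO × bI × bO) ℂ) (o : aO) (β : bO) :
    Matrix (aI × bI) (aI × bI) ℂ :=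
  W.submatrix (fun x => (x.1, o, x.2, β)) (fun x => (x.1, o, x.2, β))

theorem outputSlice_tensorIdOutputs [DecidableEq aO] [DecidableEq bO]
    (ρ : Matrix (aI × bI) (aI × bI) ℂ) (o : aO) (β : bO) :
    outputSlice (tensorIdOutputs ρ) o β = ρ := by
  ext x y
  simp [outputSlice, tensorIdOutputs]

theorem trace_tensorIdOutputs [Fintype aI] [Fintype aO] [Fintype bI] [Fintype bO]
    [DecidableEq aO] [DecidableEq bO] (ρ : Matrix (aI × bI) (aI × bI) ℂ) :
    (tensorIdOutputs ρ : Matrix (aI × aO × bI × bO) _ ℂ).trace =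
      (Fintype.card aO : ℂ) * (Fintype.card bO : ℂ) * ρ.trace := by
  simp only [Matrix.trace, Matrix.diag, tensorIdOutputs, and_self, if_true, one_mul,
    Fintype.sum_prod_type, Finset.sum_const, Finset.card_univ, nsmul_eq_mul, Finset.mul_sum]
  refine Finset.sum_congr rfl fun a _ => Finset.sum_congr rfl fun b _ => ?_
  ring

theorem memFree_of_eq_tensorIdOutputs [Fintype aI] [Fintype aO] [Fintype bI] [Fintype bO]
    [DecidableEq aI] [DecidableEq aO] [DecidableEq bI] [DecidableEq bO]
    [Nonempty aO] [Nonempty bO] {W : Matrix (aI × aO × bI × bO) (aI × aO × bI × bO) ℂ}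
    {ρ : Matrix (aI × bI) (aI × bI) ℂ} (hW : IsProcessMatrix W) (hρ : W = tensorIdOutputs ρ) :
    MemFree W := by
  obtain ⟨o⟩ := ‹Nonempty aO›
  obtain ⟨β⟩ := ‹Nonempty bO›
  have hslice : outputSlice W o β = ρ := hρ ▸ outputSlice_tensorIdOutputs ρ o β
  have hcard : (Fintype.card aO : ℂ) * (Fintype.card bO : ℂ) ≠ 0 := by
    simp [Fintype.card_ne_zero]
  refine ⟨ρ, hslice ▸ hW.posSemidef.submatrix _, ?_, fun i j => congrFun (congrFun hρ i) j⟩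
  refine mul_left_cancel₀ hcard ?_
  rw [← trace_tensorIdOutputs, ← hρ, hW.traceEq, mul_one]

theorem memCombAB_of_memFree [Fintype aI] [Fintype aO] [Fintype bI] [Fintype bO]
    [DecidableEq aI] [DecidableEq aO] [DecidableEq bI] [DecidableEq bO]
    {W : Matrix (aI × aO × bI × bO) (aI × aO × bI × bO) ℂ}
    (hW : IsProcessMatrix W) (hfree : MemFree W) : MemCombAB W := by
  obtain ⟨ρ, -, -, hρ⟩ := hfree
  refine ⟨hW, fun x y => (if x.2.1 = y.2.1 then 1 else 0) * ρ (x.1, x.2.2) (y.1, y.2.2),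
    fun i j => ?_, fun a a' => ∑ k, ρ (a, k) (a', k), fun _ _ => by rw [Finset.mul_sum]⟩
  by_cases h₁ : i.2.1 = j.2.1 <;> by_cases h₂ : i.2.2.2 = j.2.2.2 <;> simp [hρ, h₁, h₂]

theorem memCombBA_of_memFree [Fintype aI] [Fintype aO] [Fintype bI] [Fintype bO]
    [DecidableEq aI] [DecidableEq aO] [DecidableEq bI] [DecidableEq bO]
    {W : Matrix (aI × aO × bI × bO) (aI × aO × bI × bO) ℂ}
    (hW : IsProcessMatrix W) (hfree : MemFree W) : MemCombBA W := by
  obtain ⟨ρ, -, -, hρ⟩ := hfree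
  refine ⟨hW, fun x y => (if x.2.2 = y.2.2 then 1 else 0) * ρ (x.1, x.2.1) (y.1, y.2.1),
    fun i j => ?_, fun b b' => ∑ k, ρ (k, b) (k, b'), fun _ _ => by rw [Finset.mul_sum]⟩
  by_cases h₁ : i.2.1 = j.2.1 <;> by_cases h₂ : i.2.2.2 = j.2.2.2 <;> simp [hρ, h₁, h₂]

theorem eq_tensorIdOutputs_outputSlice [DecidableEq aO] [DecidableEq bO]
    {W : Matrix (aI × aO × bI × bO) (aI × aO × bI × bO) ℂ}
    {W₁ : Matrix (aI × aO × bI) (aI × aO × bI) ℂ} {W₂ : Matrix (aI × bI × bO) (aI × bI × bO) ℂ}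
    (h₁ : ∀ i j, W i j = (if i.2.2.2 = j.2.2.2 then 1 else 0) *
      W₁ (i.1, i.2.1, i.2.2.1) (j.1, j.2.1, j.2.2.1))
    (h₂ : ∀ i j, W i j = (if i.2.1 = j.2.1 then 1 else 0) *
      W₂ (i.1, i.2.2.1, i.2.2.2) (j.1, j.2.2.1, j.2.2.2))
    (o : aO) (β : bO) :
    W = tensorIdOutputs (outputSlice W o β) := by
  ext ⟨a, o₁, b, β₁⟩ ⟨a', o₂, b', β₂⟩
  by_cases ho : o₁ = o₂
  · by_cases hβ : β₁ = β₂
    · subst ho hβ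
      have hAO : W (a, o₁, b, β₁) (a', o₁, b', β₁) = W (a, o, b, β₁) (a', o, b', β₁) := by
        rw [h₂, h₂ (a, o, b, β₁)]
        simp
      have hBO : W (a, o, b, β₁) (a', o, b', β₁) = W (a, o, b, β) (a', o, b', β) := by
        rw [h₁, h₁ (a, o, b, β)]
        simp
      simpa [tensorIdOutputs, outputSlice] using hAO.trans hBO
    · simpa [tensorIdOutputs, hβ] using h₁ (a, o₁, b, β₁) (a', o₂, b', β₂)
  · simpa [tensorIdOutputs, ho] using h₂ (a, o₁, b, β₁) (a', o₂, b', β₂)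

end

theorem statement11_general {aI aO bI bO : Type}
    [Fintype aI] [Fintype aO] [Fintype bI] [Fintype bO]
    [DecidableEq aI] [DecidableEq aO] [DecidableEq bI] [DecidableEq bO]
    [Nonempty aO] [Nonempty bO]
    (W : Matrix (aI × aO × bI × bO) (aI × aO × bI × bO) ℂ)
    (hW : IsProcessMatrix W) :
    MemFree W ↔ (MemCombAB W ∧ MemCombBA W) := by
  refine ⟨fun hfree => ⟨memCombAB_of_memFree hW hfree, memCombBA_of_memFree hW hfree⟩, ?_⟩
  rintro ⟨⟨-, W₁, h₁, -⟩, -, W₂, h₂, -⟩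
  obtain ⟨o⟩ := ‹Nonempty aO›
  obtain ⟨β⟩ := ‹Nonempty bO›
  exact memFree_of_eq_tensorIdOutputs hW (eq_tensorIdOutputs_outputSlice h₁ h₂ o β)

/-- A process matrix belongs to both `W^{A≺B}` and `W^{B≺A}` if and
only if it is free: `W^{A||B} = W^{A≺B} ∩ W^{B≺A}`. -/
theorem statement11 {aI aO bI bO : Type}
    [Fintype aI] [Fintype aO] [Fintype bI] [Fintype bO]
    [DecidableEq aI] [DecidableEq aO] [DecidableEq bI] [DecidableEq bO]
    [Nonempty aI] [Nonempty aO] [Nonempty bI] [Nonempty bO]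
    (W : Matrix (aI × aO × bI × bO) (aI × aO × bI × bO) ℂ)
    (hW : IsProcessMatrix W) :
    MemFree W ↔ (MemCombAB W ∧ MemCombBA W) :=
  statement11_general W hW

end ProcessMatrices
end
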